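/- For any linear functional X on pointed k-chains with max{|X|₀,...,|X|_r} < ∞, the bound |X(A)| ≤ max{|X|₀,...,|X|_r} · ‖A‖_{B^r} holds for every pointed k-chain A. -/

import Mathlib

/-! Pointed chains: finitely supported functions from points of `E` to "k-vectors" in `V`,
difference chains, and the `B^r` norms of J. Harrison's theory of differential chains. -/

open Finsupp

variable {E V : Type*} [NormedAddCommGroup E] [NormedSpace ℝ E]
  [NormedAddCommGroup V] [NormedSpace ℝ V]

/-- The difference chain `Δ^j_U (p; α)`, for a list `U = [u₁,…,u_j]` of vectors. -/
noncomputable def diffChain : List E → E → V → (E →₀ V)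
  | [], p, α => Finsupp.single p α
  | u :: U, p, α => Finsupp.mapDomain (· + u) (diffChain U p α) - diffChain U p α

/-- The weight `|Δ^j_U(p;α)|_j := ‖u₁‖⋯‖u_j‖‖α‖` of a difference chain. -/
noncomputable def dweight (U : List E) (α : V) : ℝ := (U.map fun u => ‖u‖).prod * ‖α‖

/-- The `r`-norm `‖A‖_{B^r}` on pointed chains: the infimum of `Σᵢ |Δ^{jᵢ}_{Uᵢ}(pᵢ;αᵢ)|_{jᵢ}`
over all decompositions `A = Σᵢ Δ^{jᵢ}_{Uᵢ}(pᵢ;αᵢ)` with all `jᵢ ≤ r`. -/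
noncomputable def Bnorm (r : ℕ) (A : E →₀ V) : ℝ :=
  sInf {s : ℝ | ∃ L : List (List E × E × V),
    (∀ t ∈ L, t.1.length ≤ r) ∧
    A = (L.map fun t => diffChain t.1 t.2.1 t.2.2).sum ∧
    s = (L.map fun t => dweight t.1 t.2.2).sum}

/-! Each decomposition `A = Σᵢ Δ^{jᵢ}_{Uᵢ}(pᵢ;αᵢ)` with `jᵢ ≤ r` gives, by additivity and the
triangle inequality, `|X(A)| ≤ C · Σᵢ |Δ^{jᵢ}_{Uᵢ}(pᵢ;αᵢ)|_{jᵢ}`; passing to the infimum over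
decompositions gives the bound by `C · ‖A‖_{B^r}`. Decompositions exist, since
`A = Σ_p Δ^0(p; A p)`. -/

open Pointwise

lemma Real.le_mul_sInf_of_forall_le_mul {S : Set ℝ} {a C : ℝ} (hne : S.Nonempty)
    (hS : ∀ s ∈ S, 0 ≤ s) (ha : 0 ≤ a) (h : ∀ s ∈ S, a ≤ C * s) : a ≤ C * sInf S := by
  by_cases hC : 0 ≤ C
  · rw [← smul_eq_mul, ← Real.sInf_smul_of_nonneg hC]
    refine le_csInf hne.smul_set ?_
    rintro _ ⟨s, hs, rfl⟩
    exact h s hs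
  · obtain ⟨s₀, hs₀⟩ := hne
    have hs₀_zero : s₀ = 0 := by nlinarith [h s₀ hs₀, hS s₀ hs₀]
    have hInf : sInf S = 0 :=
      le_antisymm (csInf_le ⟨0, hS⟩ (hs₀_zero ▸ hs₀)) (le_csInf ⟨s₀, hs₀⟩ hS)
    simpa [hInf, hs₀_zero] using h s₀ hs₀

section Decomposition

variable {F W : Type*} [NormedAddCommGroup F] [NormedAddCommGroup W]

lemma dweight_nonneg (U : List F) (α : W) : 0 ≤ dweight U α :=
  mul_nonneg (List.prod_nonneg (by simp)) (norm_nonneg _)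

lemma exists_diffChain_decomposition (r : ℕ) (A : F →₀ W) :
    ∃ L : List (List F × F × W), (∀ t ∈ L, t.1.length ≤ r) ∧
      A = (L.map fun t => diffChain t.1 t.2.1 t.2.2).sum := by
  induction A using Finsupp.induction_linear with
  | zero => exact ⟨[], by simp, by simp⟩
  | add A B hA hB =>
    obtain ⟨L, hL, rfl⟩ := hA
    obtain ⟨M, hM, rfl⟩ := hB
    refine ⟨L ++ M, fun t ht => ?_, by simp⟩
    rcases List.mem_append.1 ht with ht | ht
    exacts [hL t ht, hM t ht]
  | single p α => exact ⟨[([], p, α)], by simp, by simp [diffChain]⟩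

lemma abs_apply_diffChain_sum_le (r : ℕ) (X : (F →₀ W) →+ ℝ) (C : ℝ)
    (hX : ∀ (U : List F) (p : F) (α : W), U.length ≤ r →
      |X (diffChain U p α)| ≤ C * dweight U α)
    (L : List (List F × F × W)) (hL : ∀ t ∈ L, t.1.length ≤ r) :
    |X (L.map fun t => diffChain t.1 t.2.1 t.2.2).sum| ≤
      C * (L.map fun t => dweight t.1 t.2.2).sum := by
  induction L with
  | nil => simp
  | cons t L ih =>
    simp only [List.map_cons, List.sum_cons, map_add, mul_add]
    exact (abs_add_le _ _).trans (add_le_add (hX _ _ _ (hL t List.mem_cons_self))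
      (ih fun t ht => hL t (List.mem_cons_of_mem _ ht)))

end Decomposition

/-- If `X` is a linear functional on pointed chains and `C` bounds all the
quantities `|X|₀, …, |X|_r` (i.e. `|X(Δ^j_U(p;α))| ≤ C·|Δ^j_U(p;α)|_j` whenever `j ≤ r`),
then `|X(A)| ≤ C·‖A‖_{B^r}` for every pointed chain `A`. -/
theorem dual_bound (r : ℕ) (X : (E →₀ V) →ₗ[ℝ] ℝ) (C : ℝ)
    (hX : ∀ (U : List E) (p : E) (α : V), U.length ≤ r →
      |X (diffChain U p α)| ≤ C * dweight U α)
    (A : E →₀ V) :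
    |X A| ≤ C * Bnorm r A := by
  refine Real.le_mul_sInf_of_forall_le_mul ?_ ?_ (abs_nonneg _) ?_
  · obtain ⟨L, hL, hA⟩ := exists_diffChain_decomposition r A
    exact ⟨_, L, hL, hA, rfl⟩
  · rintro _ ⟨L, -, -, rfl⟩
    refine List.sum_nonneg fun _ hw => ?_
    obtain ⟨t, -, rfl⟩ := List.mem_map.1 hw
    exact dweight_nonneg _ _
  · rintro _ ⟨L, hL, rfl, rfl⟩
    exact abs_apply_diffChain_sum_le r X.toAddMonoidHom C hX L hL
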